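/- Let $N \ge 2$, $1 < q < N$, $\lambda > 0$, and $\rho_\lambda = ((N-1)/\lambda)^{1/(1-q)}$. Define $\xi(r) = -\frac{\lambda}{N-q} r^{-q} - C\, r^{-N}$ on $(\rho_\lambda, \infty)$ with $C = \rho_\lambda^{N-1}\frac{1-q}{N-q}$. Then for all $r > \rho_\lambda$: $-(N\xi(r) + r\,\xi'(r)) = \lambda r^{-q}$, and moreover $-1 \le r\,\xi(r) \le 0$ (so the radial field $\mathbf{z}(x) = x\,\xi(|x|)$ satisfies $|\mathbf{z}| \le 1$). -/

import Mathlib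

private lemma rpow_mul_self (r : ℝ) (hr : 0 < r) (c : ℝ) : r * r ^ c = r ^ (c + 1) := by
  rw [Real.rpow_add_one hr.ne', mul_comm]

theorem stmt_7 (N : ℕ) (hN : 2 ≤ N) (q lam : ℝ) (hq1 : 1 < q) (hqN : q < N) (hlam : 0 < lam)
    (ρ : ℝ) (hρ : ρ = ((N - 1) / lam) ^ ((1 : ℝ) / (1 - q)))
    (C : ℝ) (hC : C = ρ ^ ((N : ℝ) - 1) * ((1 - q) / (N - q)))
    (ξ : ℝ → ℝ) (hξ : ∀ r, ξ r = -(lam / (N - q)) * r ^ (-q) - C * r ^ (-(N : ℝ))) :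
    ∀ r, ρ < r →
      (∃ ξ' : ℝ, HasDerivAt ξ ξ' r ∧ -(N * ξ r + r * ξ') = lam * r ^ (-q)) ∧
        -1 ≤ r * ξ r ∧ r * ξ r ≤ 0 := by
  have hn2 : (2 : ℝ) ≤ (N : ℝ) := by exact_mod_cast hN
  have hn1 : (0 : ℝ) < (N : ℝ) - 1 := by linarith
  have hnq : (0 : ℝ) < (N : ℝ) - q := by linarith
  have hq0 : (0 : ℝ) < q - 1 := by linarith
  have hbase : (0 : ℝ) < ((N : ℝ) - 1) / lam := div_pos hn1 hlam
  have hρpos : 0 < ρ := by rw [hρ]; exact Real.rpow_pos_of_pos hbase _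
  have hρ1q : ρ ^ ((1 : ℝ) - q) = ((N : ℝ) - 1) / lam := by
    rw [hρ, ← Real.rpow_mul hbase.le]
    rw [one_div, inv_mul_cancel₀ (by linarith : (1 : ℝ) - q ≠ 0), Real.rpow_one]
  intro r hr
  have hrpos : 0 < r := hρpos.trans hr
  have e1 : r * r ^ (-q - 1) = r ^ (-q) := by
    rw [rpow_mul_self r hrpos]; norm_num
  have e2 : r * r ^ (-(N : ℝ) - 1) = r ^ (-(N : ℝ)) := by
    rw [rpow_mul_self r hrpos]; norm_num
  have e3 : r * r ^ (-q) = r ^ ((1:ℝ) - q) := by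
    rw [rpow_mul_self r hrpos]; ring_nf
  have e4 : r * r ^ (-(N : ℝ)) = r ^ ((1:ℝ) - (N : ℝ)) := by
    rw [rpow_mul_self r hrpos]; ring_nf
  constructor
  · -- derivative part
    refine ⟨-(lam / (N - q)) * (-q * r ^ (-q - 1)) - C * (-(N : ℝ) * r ^ (-(N : ℝ) - 1)), ?_, ?_⟩
    · have h1 : HasDerivAt (fun x : ℝ => x ^ (-q)) (-q * r ^ (-q - 1)) r :=
        Real.hasDerivAt_rpow_const (Or.inl hrpos.ne')
      have h2 : HasDerivAt (fun x : ℝ => x ^ (-(N : ℝ))) (-(N : ℝ) * r ^ (-(N : ℝ) - 1)) r :=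
        Real.hasDerivAt_rpow_const (Or.inl hrpos.ne')
      have := ((h1.const_mul (-(lam / ((N : ℝ) - q)))).sub (h2.const_mul C))
      refine this.congr_of_eventuallyEq ?_
      filter_upwards with x
      rw [hξ x]
      rfl
    · rw [hξ r,
        show r * (-(lam / ((N:ℝ) - q)) * (-q * r ^ (-q - 1)) - C * (-(N : ℝ) * r ^ (-(N:ℝ) - 1)))
          = (lam / ((N:ℝ) - q)) * q * (r * r ^ (-q - 1)) + C * (N:ℝ) * (r * r ^ (-(N:ℝ) - 1))
          from by ring, e1, e2]
      field_simp
      ring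
  · -- bounds
    have hsr : 0 < ρ / r := div_pos hρpos hrpos
    have hs1 : ρ / r < 1 := (div_lt_one hrpos).mpr hr
    set s : ℝ := ρ / r with hs
    set a : ℝ := s ^ ((N : ℝ) - 1) with ha
    set b : ℝ := s ^ (q - 1) with hb
    have hapos : 0 < a := Real.rpow_pos_of_pos hsr _
    have hbpos : 0 < b := Real.rpow_pos_of_pos hsr _
    have hb1 : b ≤ 1 := Real.rpow_le_one hsr.le hs1.le hq0.le
    have hab : a ≤ b := Real.rpow_le_rpow_of_exponent_ge hsr hs1.le (by linarith)
    have hr1q : r ^ ((1:ℝ) - q) = (((N : ℝ) - 1) / lam) * b := by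
      have hbe : b = ρ ^ (q - 1) * r ^ ((1:ℝ) - q) := by
        rw [hb, hs, div_eq_mul_inv, Real.mul_rpow hρpos.le (by positivity),
          ← Real.rpow_neg_one r, ← Real.rpow_mul hrpos.le]
        ring_nf
      have hρq : ρ ^ (q - 1) = (ρ ^ ((1:ℝ) - q))⁻¹ := by
        rw [← Real.rpow_neg hρpos.le]; ring_nf
      rw [hbe, hρq, hρ1q]
      field_simp
    have hr1n : ρ ^ ((N : ℝ) - 1) * r ^ ((1:ℝ) - (N : ℝ)) = a := by
      rw [ha, hs, div_eq_mul_inv, Real.mul_rpow hρpos.le (by positivity),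
        ← Real.rpow_neg_one r, ← Real.rpow_mul hrpos.le]
      ring_nf
    have hval : r * ξ r = ((q - 1) * a - ((N : ℝ) - 1) * b) / ((N : ℝ) - q) := by
      rw [hξ r, hC,
        show r * (-(lam / ((N:ℝ) - q)) * r ^ (-q)
            - ρ ^ ((N:ℝ) - 1) * ((1 - q) / ((N:ℝ) - q)) * r ^ (-(N:ℝ)))
          = -(lam / ((N:ℝ) - q)) * (r * r ^ (-q))
            - ((1 - q) / ((N:ℝ) - q)) * (ρ ^ ((N:ℝ) - 1) * (r * r ^ (-(N:ℝ))))
          from by ring, e3, e4,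
        show ρ ^ ((N:ℝ) - 1) * (r ^ ((1:ℝ) - (N:ℝ))) = a from hr1n, hr1q]
      field_simp
      ring
    rw [hval]
    constructor
    · rw [le_div_iff₀ hnq]
      have hθ : b = a ^ ((q - 1) / ((N : ℝ) - 1)) := by
        rw [ha, hb, ← Real.rpow_mul hsr.le]
        congr 1
        field_simp
      have hamgm : b ≤ ((q - 1) / ((N : ℝ) - 1)) * a + (1 - (q - 1) / ((N : ℝ) - 1)) * 1 := by
        have h2 : (0:ℝ) ≤ 1 - (q - 1) / ((N : ℝ) - 1) := by
          rw [sub_nonneg, div_le_one hn1]; linarith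
        have := Real.geom_mean_le_arith_mean2_weighted
          (w₁ := (q - 1) / ((N : ℝ) - 1)) (w₂ := 1 - (q - 1) / ((N : ℝ) - 1))
          (p₁ := a) (p₂ := 1)
          (by positivity) h2 hapos.le zero_le_one (by ring)
        rw [hθ]
        simpa using this
      have h := mul_le_mul_of_nonneg_left hamgm hn1.le
      have hexp : ((N : ℝ) - 1) * (((q - 1) / ((N : ℝ) - 1)) * a + (1 - (q - 1) / ((N : ℝ) - 1)) * 1)
          = (q - 1) * a + ((N : ℝ) - q) := by
        field_simp
        ring
      nlinarith
    · apply div_nonpos_of_nonpos_of_nonneg _ hnq.le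
      nlinarith [mul_le_mul_of_nonneg_left hab hq0.le]
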